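/- Define the Kelvin-type inversion I on functions on ℝᵐ \ {0} by (I f)(x) = ‖x‖^{2−m} f( x / ‖x‖² ). Then (1) I(I f) = f for every function f on ℝᵐ \ {0}; and (2) for every smooth f : ℝᵐ \ {0} → ℝ, every i ∈ {1,…,m} and every x ≠ 0: ‖x‖² ∂_i f(x) + (2−m) x_i f(x) − 2 x_i E f(x) = I( ∂_i (I f) )(x). (Componentwise scalar form, for trivial multiplicity function k = 0, of the proposition that the Kelvin transform I intertwines the Dirac operator with the a = −2 deformed Dirac operator: 𝒟_{−2} = I ∘ 𝒟 ∘ I.) -/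

import Mathlib

open Real

/-- `i`-th partial derivative of a scalar function on Euclidean space. -/
noncomputable def pd {m : ℕ} (i : Fin m) (f : EuclideanSpace ℝ (Fin m) → ℝ)
    (x : EuclideanSpace ℝ (Fin m)) : ℝ :=
  fderiv ℝ f x (EuclideanSpace.single i 1)

/-- Euler operator `E f (x) = ∑ j, x j * ∂_j f (x)`. -/
noncomputable def euler {m : ℕ} (f : EuclideanSpace ℝ (Fin m) → ℝ)
    (x : EuclideanSpace ℝ (Fin m)) : ℝ :=
  ∑ j, x j * pd j f x

/-- Components `D_i` of the deformed Dirac operator (trivial multiplicity `k = 0`). -/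
noncomputable def Dop {m : ℕ} (a b c : ℝ) (i : Fin m)
    (f : EuclideanSpace ℝ (Fin m) → ℝ) (x : EuclideanSpace ℝ (Fin m)) : ℝ :=
  ‖x‖ ^ (1 - a / 2) * pd i f x + b * ‖x‖ ^ (-(a / 2) - 1) * x i * f x
    + c * ‖x‖ ^ (-(a / 2) - 1) * x i * euler f x

/-- The Kelvin-type inversion `(I f)(x) = ‖x‖^{2-m} f(x/‖x‖²)`. -/
noncomputable def kelvin {m : ℕ} (f : EuclideanSpace ℝ (Fin m) → ℝ)
    (x : EuclideanSpace ℝ (Fin m)) : ℝ :=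
  ‖x‖ ^ (2 - (m : ℝ)) * f ((‖x‖ ^ (-2 : ℝ)) • x)

section Aux

variable {m : ℕ}

/-- The inversion map `x ↦ x / ‖x‖²`. -/
noncomputable def iv (x : EuclideanSpace ℝ (Fin m)) : EuclideanSpace ℝ (Fin m) :=
  (‖x‖ ^ (-2 : ℝ)) • x

lemma rpow_neg_two' (r : ℝ) (hr : 0 ≤ r) : r ^ (-2 : ℝ) = (r ^ 2)⁻¹ := by
  rw [show (-2:ℝ) = -(2:ℝ) by norm_num, Real.rpow_neg hr, Real.rpow_two]

lemma iv_eq (x : EuclideanSpace ℝ (Fin m)) :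
    iv x = ((‖x‖ ^ 2 : ℝ) ^ (-1 : ℝ)) • x := by
  unfold iv
  rw [rpow_neg_two' _ (norm_nonneg x), Real.rpow_neg_one]

lemma iv_apply (x : EuclideanSpace ℝ (Fin m)) (j : Fin m) :
    iv x j = (‖x‖ ^ 2 : ℝ)⁻¹ * x j := by
  rw [iv, rpow_neg_two' _ (norm_nonneg x)]
  rfl

lemma norm_iv (x : EuclideanSpace ℝ (Fin m)) (hx : x ≠ 0) : ‖iv x‖ = ‖x‖⁻¹ := by
  have h : (0:ℝ) < ‖x‖ := norm_pos_iff.mpr hx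
  rw [iv, norm_smul, Real.norm_eq_abs, abs_of_pos (Real.rpow_pos_of_pos h _),
    rpow_neg_two' _ (norm_nonneg x), sq]
  field_simp

lemma iv_ne (x : EuclideanSpace ℝ (Fin m)) (hx : x ≠ 0) : iv x ≠ 0 := by
  intro h
  have h2 := norm_iv x hx
  rw [h, norm_zero] at h2
  exact inv_ne_zero (norm_ne_zero_iff.mpr hx) h2.symm

lemma iv_iv (x : EuclideanSpace ℝ (Fin m)) (hx : x ≠ 0) : iv (iv x) = x := by
  have h : (0:ℝ) < ‖x‖ := norm_pos_iff.mpr hx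
  rw [iv, norm_iv x hx, iv, smul_smul, rpow_neg_two' _ (by positivity),
    rpow_neg_two' _ (norm_nonneg x)]
  rw [show ((‖x‖⁻¹ ^ 2)⁻¹ * (‖x‖ ^ 2)⁻¹ : ℝ) = 1 by field_simp, one_smul]

lemma sum_single' (y : EuclideanSpace ℝ (Fin m)) :
    ∑ j, y j • EuclideanSpace.single j (1:ℝ) = y := by
  ext k
  rw [show (∑ j, y j • EuclideanSpace.single j (1:ℝ)) k
      = ∑ j, (y j • EuclideanSpace.single j (1:ℝ)) k from by rw [WithLp.ofLp_sum]; exact Finset.sum_apply k _ _]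
  simp [EuclideanSpace.single_apply]

lemma clm_sum (L : EuclideanSpace ℝ (Fin m) →L[ℝ] ℝ) (y : EuclideanSpace ℝ (Fin m)) :
    L y = ∑ j, y j * L (EuclideanSpace.single j 1) := by
  conv_lhs => rw [← sum_single' y]
  rw [map_sum]
  simp [smul_eq_mul]

lemma norm_rpow_eq (x : EuclideanSpace ℝ (Fin m)) (c : ℝ) :
    ‖x‖ ^ (c : ℝ) = (‖x‖ ^ 2 : ℝ) ^ (c / 2 : ℝ) := by
  rw [← Real.rpow_natCast ‖x‖ 2, ← Real.rpow_mul (norm_nonneg x)]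
  congr 1; ring

lemma kelvin_eq (f : EuclideanSpace ℝ (Fin m) → ℝ) :
    kelvin f = fun x => (‖x‖ ^ 2 : ℝ) ^ ((2 - (m:ℝ)) / 2 : ℝ) * f (iv x) := by
  funext x
  rw [kelvin, norm_rpow_eq x (2 - m), iv]

lemma kelvin_apply (f : EuclideanSpace ℝ (Fin m) → ℝ) (x : EuclideanSpace ℝ (Fin m)) :
    kelvin f x = ‖x‖ ^ (2 - (m : ℝ)) * f (iv x) := rfl

lemma pd_kelvin (f : EuclideanSpace ℝ (Fin m) → ℝ)
    (hf : ContDiffOn ℝ (⊤ : ℕ∞) f {(0 : EuclideanSpace ℝ (Fin m))}ᶜ)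
    (i : Fin m) (y : EuclideanSpace ℝ (Fin m)) (hy : y ≠ 0) :
    pd i (kelvin f) y =
      (‖y‖ ^ 2 : ℝ) ^ ((2 - (m:ℝ)) / 2 : ℝ) *
        ((‖y‖ ^ 2 : ℝ) ^ (-1 : ℝ) * pd i f (iv y)
          - 2 * (‖y‖ ^ 2 : ℝ) ^ (-2 : ℝ) * y i * ∑ j, y j * pd j f (iv y))
      + ((2 - (m:ℝ)) * (‖y‖ ^ 2 : ℝ) ^ ((2 - (m:ℝ)) / 2 - 1 : ℝ) * y i) * f (iv y) := by
  have hy0 : (0:ℝ) < ‖y‖ := norm_pos_iff.mpr hy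
  have hQ : (0:ℝ) < ‖y‖ ^ 2 := by positivity
  have hQ' : (‖y‖ ^ 2 : ℝ) ≠ 0 := ne_of_gt hQ
  have hq : HasFDerivAt (fun x : EuclideanSpace ℝ (Fin m) => (‖x‖ ^ 2 : ℝ))
      (2 • (innerSL ℝ y)) y := (hasStrictFDerivAt_norm_sq y).hasFDerivAt
  have hA : HasFDerivAt (fun x : EuclideanSpace ℝ (Fin m) => (‖x‖ ^ 2 : ℝ) ^ ((2 - (m:ℝ)) / 2 : ℝ))
      ((((2 - (m:ℝ)) / 2) * (‖y‖ ^ 2 : ℝ) ^ ((2 - (m:ℝ)) / 2 - 1 : ℝ)) • (2 • (innerSL ℝ y))) y :=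
    hq.rpow_const (Or.inl hQ')
  have hc : HasFDerivAt (fun x : EuclideanSpace ℝ (Fin m) => (‖x‖ ^ 2 : ℝ) ^ (-1 : ℝ))
      (((-1) * (‖y‖ ^ 2 : ℝ) ^ (-1 - 1 : ℝ)) • (2 • (innerSL ℝ y))) y :=
    hq.rpow_const (Or.inl hQ')
  have hσ : HasFDerivAt (iv (m := m))
      (((‖y‖ ^ 2 : ℝ) ^ (-1 : ℝ)) • ContinuousLinearMap.id ℝ _
        + ((((-1) * (‖y‖ ^ 2 : ℝ) ^ (-1 - 1 : ℝ)) • (2 • (innerSL ℝ y))).smulRight y)) y := by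
    have := hc.smul (hasFDerivAt_id y)
    simp only [id] at this
    have e : iv (m := m) = (fun x : EuclideanSpace ℝ (Fin m) => (‖x‖ ^ 2 : ℝ) ^ (-1 : ℝ)) • id := by
      funext x
      exact iv_eq x
    rw [e]; exact this
  have hz : iv y ≠ 0 := iv_ne y hy
  have hfz : HasFDerivAt f (fderiv ℝ f (iv y)) (iv y) := by
    have : ContDiffAt ℝ (⊤ : ℕ∞) f (iv y) :=
      hf.contDiffAt (IsOpen.mem_nhds isOpen_compl_singleton hz)
    exact (this.differentiableAt (by simp)).hasFDerivAt
  have hB : HasFDerivAt (fun x => f (iv x)) ((fderiv ℝ f (iv y)).comp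
      (((‖y‖ ^ 2 : ℝ) ^ (-1 : ℝ)) • ContinuousLinearMap.id ℝ _
        + ((((-1) * (‖y‖ ^ 2 : ℝ) ^ (-1 - 1 : ℝ)) • (2 • (innerSL ℝ y))).smulRight y))) y :=
    hfz.comp y hσ
  have hk := hA.mul hB
  simp only [Pi.mul_def] at hk
  rw [← kelvin_eq f] at hk
  rw [pd, hk.fderiv]
  simp only [ContinuousLinearMap.add_apply, ContinuousLinearMap.smul_apply,
    ContinuousLinearMap.coe_comp', Function.comp_apply, ContinuousLinearMap.smulRight_apply,
    ContinuousLinearMap.coe_smul', Pi.smul_apply, ContinuousLinearMap.id_apply,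
    innerSL_apply_apply, smul_eq_mul]
  simp only [nsmul_eq_mul, Nat.cast_ofNat, real_inner_comm,
    EuclideanSpace.inner_single_right, conj_trivial, one_mul, map_add, map_smul, smul_eq_mul]
  rw [clm_sum (fderiv ℝ f (iv y)) y]
  simp only [pd]
  ring

end Aux

theorem stmt_19 (m : ℕ) (hm : 1 ≤ m) :
    (∀ (f : EuclideanSpace ℝ (Fin m) → ℝ) (x : EuclideanSpace ℝ (Fin m)), x ≠ 0 →
      kelvin (kelvin f) x = f x) ∧
    ∀ (f : EuclideanSpace ℝ (Fin m) → ℝ),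
      ContDiffOn ℝ (⊤ : ℕ∞) f {(0 : EuclideanSpace ℝ (Fin m))}ᶜ →
      ∀ (i : Fin m) (x : EuclideanSpace ℝ (Fin m)), x ≠ 0 →
        ‖x‖ ^ 2 * pd i f x + (2 - (m : ℝ)) * x i * f x - 2 * x i * euler f x
          = kelvin (pd i (kelvin f)) x := by
  constructor
  · intro f x hx
    have h : (0:ℝ) < ‖x‖ := norm_pos_iff.mpr hx
    rw [kelvin_apply, kelvin_apply, iv_iv x hx, norm_iv x hx, ← mul_assoc,
      Real.inv_rpow (norm_nonneg x), mul_inv_cancel₀ (Real.rpow_pos_of_pos h _).ne', one_mul]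
  · intro f hf i x hx
    have h : (0:ℝ) < ‖x‖ := norm_pos_iff.mpr hx
    have hQ : (0:ℝ) < ‖x‖ ^ 2 := by positivity
    have hQ' : (‖x‖ ^ 2 : ℝ) ≠ 0 := ne_of_gt hQ
    rw [kelvin_apply, pd_kelvin f hf i (iv x) (iv_ne x hx), iv_iv x hx, norm_iv x hx]
    simp only [iv_apply]
    have hsum : ∑ j, ((‖x‖ ^ 2 : ℝ)⁻¹ * x j) * pd j f x = (‖x‖ ^ 2 : ℝ)⁻¹ * euler f x := by
      rw [euler, Finset.mul_sum]
      exact Finset.sum_congr rfl (by intros; ring)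
    rw [hsum]
    have hQi : ((‖x‖⁻¹ : ℝ) ^ 2) = ((‖x‖ ^ 2 : ℝ))⁻¹ := by rw [inv_pow]
    rw [hQi]
    set Q : ℝ := ‖x‖ ^ 2 with hQdef
    set c : ℝ := 2 - (m : ℝ) with hcdef
    have e1 : (Q⁻¹) ^ (-1 : ℝ) = Q := by rw [Real.rpow_neg_one, inv_inv]
    have e2 : (Q⁻¹) ^ (-2 : ℝ) = Q ^ 2 := by rw [rpow_neg_two' _ (by positivity), inv_pow, inv_inv]
    have e3 : (Q⁻¹) ^ (c / 2 : ℝ) = (Q ^ (c / 2 : ℝ))⁻¹ := Real.inv_rpow hQ.le _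
    have e4 : (Q⁻¹) ^ (c / 2 - 1 : ℝ) = Q * (Q ^ (c / 2 : ℝ))⁻¹ := by
      rw [Real.inv_rpow hQ.le, Real.rpow_sub hQ, Real.rpow_one]
      field_simp
    have e5 : ‖x‖ ^ (c : ℝ) = Q ^ (c / 2 : ℝ) := norm_rpow_eq x c
    rw [e1, e2, e3, e4, e5]
    have ht : (Q ^ (c / 2 : ℝ)) ≠ 0 := (Real.rpow_pos_of_pos hQ _).ne'
    set t : ℝ := Q ^ (c / 2 : ℝ)
    field_simp
    ring
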